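/- (Fluid abandoning queue-length formula.) Let ϑ ∈ I, let ζ be the unique fluid model solution with initial measure ϑ, let w be the unique workload fluid model solution with w(0) = w_ϑ, define τ(t) = inf{s ∈ [0,t] : w(s) + s ≥ t}, and let L = {(a,p) ∈ [0,∞)² : p ≤ a}. Then for each 1 ≤ k ≤ K: if 0 ≤ t < w(0), then ζ_k(t)(L) = ϑ_k(L_t) + λ_k ∫_0^t (G_k(t−v) − G_k(w(v))) dv; and if t ≥ w(0), then ζ_k(t)(L) = λ_k ∫_{τ(t)}^t (G_k(t−v) − G_k(w(v))) dv. -/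

import Mathlib

/-!
Take `B = L` in the defining equation of `ζ`. A job arriving at time `s` is placed at
`(w(s), patience)`, so its contribution `(δ⁺_{w(s)} × Γ_k)(L_{t-s})` is
`Γ_k([t - s, w(s)]) = G_k(t - s) - G_k(w(s))` when `t - s ≤ w(s)` and `0` otherwise. Because
`s ↦ w(s) + s` is nondecreasing, the second case occurs exactly on `[0, τ(t))`; when
`t < w(0)` it never occurs. When `t ≥ w(0) = w_ϑ`, the initial term `ϑ_k(L_t)` vanishes: the part
of `L_t` on the line `{t} × [0, ∞)` lies in the corner set `C_{(t,0)}`, which `ϑ` does not charge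
by (I.1), and the rest lies in `(t, ∞) × [0, ∞)`, which `ϑ` does not charge by definition of `w_ϑ`.
The workload carried by `ζ` is `w` itself, by a comparison argument: `G_k` is antitone, so
`w - w'` cannot grow while it is positive.
-/

open MeasureTheory Set Filter Topology
open scoped ENNReal

noncomputable section

namespace OverloadedFIFO

/-- The complement `G(x) = Γ((x, ∞))` of the cumulative distribution function of `Γ`. -/
def Gk (Γ : MeasureTheory.Measure ℝ) (x : ℝ) : ℝ := (Γ (Set.Ioi x)).toReal

/-- Model data: `K` job classes with arrival rates `lam`, service rates `mu`, and
deadline (patience) distributions `Γ`, in the overloaded regime `ρ > 1`.  Each `Γ k` is a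
Borel probability measure on `[0,∞)` (no mass on negatives), with continuous c.d.f.
(no atoms, in particular `Γ k {0} = 0`) and finite mean. -/
structure Data (K : ℕ) where
  lam : Fin K → ℝ
  mu : Fin K → ℝ
  Γ : Fin K → MeasureTheory.Measure ℝ
  lam_pos : ∀ k, 0 < lam k
  mu_pos : ∀ k, 0 < mu k
  Γ_prob : ∀ k, MeasureTheory.IsProbabilityMeasure (Γ k)
  Γ_null_neg : ∀ k, Γ k (Set.Iio 0) = 0
  Γ_noAtom : ∀ k, ∀ x : ℝ, Γ k {x} = 0
  Γ_finite_mean : ∀ k, MeasureTheory.Integrable id (Γ k)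
  rho_gt_one : 1 < ∑ k, lam k / mu k

instance {K : ℕ} (D : Data K) (k : Fin K) : IsProbabilityMeasure (D.Γ k) := D.Γ_prob k

/-- `ρ_k = λ_k / μ_k`. -/
def Data.rho {K : ℕ} (D : Data K) (k : Fin K) : ℝ := D.lam k / D.mu k

/-- `ρ = Σ_k ρ_k`. -/
def Data.rhoTot {K : ℕ} (D : Data K) : ℝ := ∑ k, D.rho k

/-- A workload fluid model solution: a nonnegative function `w` on `[0,∞)` satisfying
`w(t) = w(0) + Σ_k ρ_k ∫_0^t G_k(w(s)) ds − t` for all `t ≥ 0`. -/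
def IsWorkloadSol {K : ℕ} (D : Data K) (w : ℝ → ℝ) : Prop :=
  (∀ t : ℝ, 0 ≤ t → 0 ≤ w t) ∧
  (∀ k : Fin K, ∀ t : ℝ, 0 ≤ t →
    IntervalIntegrable (fun s => Gk (D.Γ k) (w s)) volume 0 t) ∧
  (∀ t : ℝ, 0 ≤ t →
    w t = w 0 + (∑ k, D.rho k * ∫ s in (0:ℝ)..t, Gk (D.Γ k) (w s)) - t)

/-- `w_l = sup {u ≥ 0 : Σ_k ρ_k G_k(u) > 1}`. -/
def wl {K : ℕ} (D : Data K) : ℝ :=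
  sSup {u : ℝ | 0 ≤ u ∧ 1 < ∑ k, D.rho k * Gk (D.Γ k) u}

/-- `w_u = sup {u ≥ 0 : Σ_k ρ_k G_k(u) ≥ 1}`. -/
def wu {K : ℕ} (D : Data K) : ℝ :=
  sSup {u : ℝ | 0 ≤ u ∧ 1 ≤ ∑ k, D.rho k * Gk (D.Γ k) u}

/-- `d_max = max_k sup {x ≥ 0 : G_k(x) > 0} ∈ (0,∞]`, as an extended nonnegative real. -/
def dmax {K : ℕ} (D : Data K) : ℝ≥0∞ :=
  ⨆ k, sSup (ENNReal.ofReal '' {x : ℝ | 0 ≤ x ∧ 0 < Gk (D.Γ k) x})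

/-- `τ(t) = inf {s ∈ [0,t] : w(s) + s ≥ t}`. -/
def tauF (w : ℝ → ℝ) (t : ℝ) : ℝ := sInf {s : ℝ | 0 ≤ s ∧ s ≤ t ∧ t ≤ w s + s}

/-- The nonnegative quadrant `[0,∞)²`. -/
def Q : Set (ℝ × ℝ) := {p | 0 ≤ p.1 ∧ 0 ≤ p.2}

/-- The shift `B_x = {y ∈ [0,∞)² : y − x ∈ B}` of a set `B ⊆ [0,∞)²`. -/
def shift (B : Set (ℝ × ℝ)) (x : ℝ × ℝ) : Set (ℝ × ℝ) :=
  {y | y ∈ Q ∧ (y.1 - x.1, y.2 - x.2) ∈ B}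

/-- Diagonal shift `B_t = B_{(t,t)}`. -/
def shiftd (B : Set (ℝ × ℝ)) (t : ℝ) : Set (ℝ × ℝ) := shift B (t, t)

/-- The set `C = ([0,∞)×{0}) ∪ ({0}×[0,∞))`. -/
def Cset : Set (ℝ × ℝ) := {p | (0 ≤ p.1 ∧ p.2 = 0) ∨ (p.1 = 0 ∧ 0 ≤ p.2)}

/-- The `κ`-enlargement `B^κ = {x ∈ [0,∞)² : inf_{y ∈ B} ‖x−y‖ < κ}` (Euclidean norm). -/
def enlarge (B : Set (ℝ × ℝ)) (κ : ℝ) : Set (ℝ × ℝ) :=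
  {x | x ∈ Q ∧ ∃ y ∈ B, Real.sqrt ((x.1 - y.1) ^ 2 + (x.2 - y.2) ^ 2) < κ}

/-- `w_ϑ = sup {x ≥ 0 : ϑ_+([x,∞)×[0,∞)) > 0}` for a `K`-tuple `ϑ` of measures on `[0,∞)²`. -/
def wMeas {K : ℕ} (ϑ : Fin K → MeasureTheory.Measure (ℝ × ℝ)) : ℝ :=
  sSup {x : ℝ | 0 ≤ x ∧ 0 < ∑ k, ϑ k (Set.Ici x ×ˢ Set.Ici (0:ℝ))}

/-- Membership in the set `I` of admissible initial measures: each `ϑ k` is a finite Borel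
measure on `[0,∞)²`; (I.1) the superposition charges no corner set `C_x`, `x ∈ [0,∞)²`;
(I.2) `w_ϑ < ∞`; (I.3) `max_k G_k(w_ϑ − ε) > 0` for every `ε > 0`. -/
def MemI {K : ℕ} (D : Data K) (ϑ : Fin K → MeasureTheory.Measure (ℝ × ℝ)) : Prop :=
  (∀ k, IsFiniteMeasure (ϑ k)) ∧
  (∀ k, ϑ k Qᶜ = 0) ∧
  (∀ x ∈ Q, (∑ k, ϑ k (shift Cset x)) = 0) ∧
  BddAbove {x : ℝ | 0 ≤ x ∧ 0 < ∑ k, ϑ k (Set.Ici x ×ˢ Set.Ici (0:ℝ))} ∧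
  (∀ ε : ℝ, 0 < ε → ∃ k, 0 < Gk (D.Γ k) (wMeas ϑ - ε))

/-- `δ⁺_w`: the Dirac measure at `w` if `w > 0`, and the zero measure otherwise. -/
def deltaPlus (w : ℝ) : MeasureTheory.Measure ℝ :=
  if 0 < w then MeasureTheory.Measure.dirac w else 0

instance (w : ℝ) : SFinite (deltaPlus w) := by
  unfold deltaPlus; split_ifs <;> infer_instance

/-- `(δ⁺_w × Γ)(B)`, as a real number. -/
def kern (Γ : MeasureTheory.Measure ℝ) (w : ℝ) (B : Set (ℝ × ℝ)) : ℝ :=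
  (((deltaPlus w).prod Γ) B).toReal

/-- A (measure-valued) fluid model solution with initial measure `ϑ`: a family
`ζ(t) = (ζ_1(t),…,ζ_K(t))` of finite Borel measures on `[0,∞)²` with `ζ(0) = ϑ` satisfying
`ζ_k(t)(B) = ϑ_k(B_t) + λ_k ∫_0^t (δ⁺_{w(s)} × Γ_k)(B_{t−s}) ds` for every Borel
`B ⊆ [0,∞)²` and `t ≥ 0`, where `w` is the (unique) workload fluid model solution with
`w(0) = w_ϑ`. -/
def IsFluidSol {K : ℕ} (D : Data K) (ϑ : Fin K → MeasureTheory.Measure (ℝ × ℝ))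
    (ζ : ℝ → Fin K → MeasureTheory.Measure (ℝ × ℝ)) : Prop :=
  ∃ w : ℝ → ℝ, IsWorkloadSol D w ∧ w 0 = wMeas ϑ ∧
    (∀ t : ℝ, 0 ≤ t → ∀ k, IsFiniteMeasure (ζ t k) ∧ ζ t k Qᶜ = 0) ∧
    (∀ k, ζ 0 k = ϑ k) ∧
    (∀ k, ∀ B : Set (ℝ × ℝ), B ⊆ Q → MeasurableSet B → ∀ t : ℝ, 0 ≤ t →
      IntervalIntegrable (fun s => kern (D.Γ k) (w s) (shiftd B (t - s))) volume 0 t ∧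
      ζ t k B = ϑ k (shiftd B t) +
        ENNReal.ofReal (D.lam k * ∫ s in (0:ℝ)..t, kern (D.Γ k) (w s) (shiftd B (t - s))))

/-- The candidate invariant state `θ^w`:
`θ^w_k(B) = λ_k ∫_0^w Γ_k({p ≥ u : (w−u, p−u) ∈ B}) du`. -/
def thetaW {K : ℕ} (D : Data K) (w : ℝ) (k : Fin K) : MeasureTheory.Measure (ℝ × ℝ) :=
  ENNReal.ofReal (D.lam k) •
    MeasureTheory.Measure.map (fun up : ℝ × ℝ => (w - up.1, up.2 - up.1))
      ((((MeasureTheory.volume.restrict (Set.Ioo (0:ℝ) w))).prod (D.Γ k)).restrict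
        {up : ℝ × ℝ | up.1 ≤ up.2})

instance {K : ℕ} (D : Data K) (k : Fin K) : NullSingletonClass (D.Γ k) := ⟨D.Γ_noAtom k⟩

lemma Data.rho_nonneg {K : ℕ} (D : Data K) (k : Fin K) : 0 ≤ D.rho k :=
  (div_pos (D.lam_pos k) (D.mu_pos k)).le

lemma Gk_nonneg (Γ : Measure ℝ) (x : ℝ) : 0 ≤ Gk Γ x := ENNReal.toReal_nonneg

lemma Gk_antitone (Γ : Measure ℝ) [IsFiniteMeasure Γ] : Antitone (Gk Γ) := fun _ _ hab =>
  ENNReal.toReal_mono (measure_ne_top _ _) (measure_mono (Ioi_subset_Ioi hab))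

lemma measureReal_Ioc_eq_Gk_sub (Γ : Measure ℝ) [IsFiniteMeasure Γ] {a b : ℝ} (hab : a ≤ b) :
    Γ.real (Ioc a b) = Gk Γ a - Gk Γ b := by
  rw [Gk, Gk, ← measureReal_def, ← measureReal_def, ← Ioc_union_Ioi_eq_Ioi hab,
    measureReal_union (Ioc_disjoint_Ioi le_rfl) measurableSet_Ioi]
  ring

/-- The first coordinate is the time left until the job would enter service, the second its
remaining patience, so `abandonSet` holds the jobs that abandon before reaching service. -/
def abandonSet : Set (ℝ × ℝ) := {p | 0 ≤ p.2 ∧ p.2 ≤ p.1}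

lemma abandonSet_subset_Q : abandonSet ⊆ Q := fun _ hp => ⟨hp.1.trans hp.2, hp.1⟩

lemma measurableSet_abandonSet : MeasurableSet abandonSet :=
  (measurableSet_le measurable_const measurable_snd).inter
    (measurableSet_le measurable_snd measurable_fst)

lemma preimage_prodMk_shiftd_abandonSet {a r : ℝ} (ha : 0 ≤ a) (hr : 0 ≤ r) :
    Prod.mk a ⁻¹' shiftd abandonSet r = Icc r a := by
  ext p
  simp only [mem_preimage, shiftd, shift, abandonSet, Q, mem_ofPred_eq, mem_Icc]
  constructor
  · rintro ⟨-, hpr, hpa⟩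
    constructor <;> linarith
  · rintro ⟨hrp, hpa⟩
    exact ⟨⟨ha, hr.trans hrp⟩, by linarith, by linarith⟩

lemma kern_shiftd_abandonSet (Γ : Measure ℝ) [SFinite Γ] {a r : ℝ} (ha : 0 < a) (hr : 0 ≤ r) :
    kern Γ a (shiftd abandonSet r) = (Γ (Icc r a)).toReal := by
  rw [kern, deltaPlus, if_pos ha, Measure.dirac_prod,
    (measurableEmbedding_prodMk_left a).map_apply, preimage_prodMk_shiftd_abandonSet ha.le hr]

lemma kern_shiftd_abandonSet_of_lt (Γ : Measure ℝ) [SFinite Γ] {a r : ℝ} (hr : 0 ≤ r)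
    (har : a < r) : kern Γ a (shiftd abandonSet r) = 0 := by
  rcases lt_or_ge 0 a with ha | ha
  · rw [kern_shiftd_abandonSet Γ ha hr, Icc_eq_empty_of_lt har, measure_empty,
      ENNReal.toReal_zero]
  · simp [kern, deltaPlus, ha.not_gt]

lemma kern_shiftd_abandonSet_of_le (Γ : Measure ℝ) [IsFiniteMeasure Γ] [NullSingletonClass Γ]
    {a r : ℝ} (hr : 0 ≤ r) (hra : r ≤ a) :
    kern Γ a (shiftd abandonSet r) = Gk Γ r - Gk Γ a := by
  rcases (hr.trans hra).eq_or_lt with rfl | ha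
  · obtain rfl : r = 0 := le_antisymm hra hr
    simp [kern, deltaPlus]
  · rw [kern_shiftd_abandonSet Γ ha hr, ← measureReal_def, measureReal_congr Ioc_ae_eq_Icc.symm,
      measureReal_Ioc_eq_Gk_sub Γ hra]

lemma integral_kern_shiftd_abandonSet (Γ : Measure ℝ) [IsFiniteMeasure Γ] [NullSingletonClass Γ]
    {w : ℝ → ℝ} {τ t : ℝ} (hτ : 0 ≤ τ) (hτt : τ ≤ t)
    (hint : IntervalIntegrable (fun s => kern Γ (w s) (shiftd abandonSet (t - s))) volume 0 t)
    (hbefore : ∀ s ∈ Ioo 0 τ, w s < t - s) (hafter : ∀ s ∈ Ioo τ t, t - s ≤ w s) :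
    ∫ s in (0:ℝ)..t, kern Γ (w s) (shiftd abandonSet (t - s)) =
      ∫ s in τ..t, (Gk Γ (t - s) - Gk Γ (w s)) := by
  have hτ_mem : τ ∈ uIcc 0 t := mem_uIcc_of_le hτ hτt
  have hzero : ∫ s in (0:ℝ)..τ, kern Γ (w s) (shiftd abandonSet (t - s)) = 0 := by
    rw [intervalIntegral.integral_congr_Ioo_of_le hτ (g := fun _ => 0) fun s hs =>
      kern_shiftd_abandonSet_of_lt Γ (by linarith [hs.2]) (hbefore s hs)]
    exact intervalIntegral.integral_zero
  rw [← intervalIntegral.integral_add_adjacent_intervals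
      (hint.mono_set (uIcc_subset_uIcc left_mem_uIcc hτ_mem))
      (hint.mono_set (uIcc_subset_uIcc hτ_mem right_mem_uIcc)), hzero, zero_add]
  exact intervalIntegral.integral_congr_Ioo_of_le hτt fun s hs =>
    kern_shiftd_abandonSet_of_le Γ (by linarith [hs.2]) (hafter s hs)

section Workload

variable {K : ℕ} {D : Data K} {w w₂ : ℝ → ℝ}

lemma IsWorkloadSol.intervalIntegrable (hw : IsWorkloadSol D w) (k : Fin K) {a b : ℝ}
    (ha : 0 ≤ a) (hb : 0 ≤ b) : IntervalIntegrable (fun s => Gk (D.Γ k) (w s)) volume a b :=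
  (hw.2.1 k a ha).symm.trans (hw.2.1 k b hb)

lemma IsWorkloadSol.sub_eq (hw : IsWorkloadSol D w) {a b : ℝ} (ha : 0 ≤ a) (hb : 0 ≤ b) :
    w b - w a = (∑ k, D.rho k * ∫ s in a..b, Gk (D.Γ k) (w s)) - (b - a) := by
  have hsplit : ∀ k, ∫ s in a..b, Gk (D.Γ k) (w s) =
      (∫ s in (0:ℝ)..b, Gk (D.Γ k) (w s)) - ∫ s in (0:ℝ)..a, Gk (D.Γ k) (w s) := fun k =>
    (intervalIntegral.integral_interval_sub_left (hw.2.1 k b hb) (hw.2.1 k a ha)).symm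
  rw [hw.2.2 b hb, hw.2.2 a ha]
  simp only [hsplit, mul_sub, Finset.sum_sub_distrib]
  ring

lemma IsWorkloadSol.monotoneOn_add (hw : IsWorkloadSol D w) :
    MonotoneOn (fun s => w s + s) (Ici 0) := by
  intro a ha b hb hab
  have hsum : 0 ≤ ∑ k, D.rho k * ∫ s in a..b, Gk (D.Γ k) (w s) :=
    Finset.sum_nonneg fun k _ => mul_nonneg (D.rho_nonneg k)
      (intervalIntegral.integral_nonneg hab fun _ _ => Gk_nonneg _ _)
  linarith [hw.sub_eq ha hb]

lemma IsWorkloadSol.continuousOn (hw : IsWorkloadSol D w) (T : ℝ) : ContinuousOn w (Icc 0 T) := by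
  rcases lt_or_ge T 0 with hT | hT
  · simp [Icc_eq_empty_of_lt hT]
  rw [← uIcc_of_le hT]
  have hprim : ∀ k, ContinuousOn (fun t => ∫ s in (0:ℝ)..t, Gk (D.Γ k) (w s)) (uIcc 0 T) :=
    fun k => intervalIntegral.continuousOn_primitive_interval' (hw.2.1 k T hT) left_mem_uIcc
  refine ContinuousOn.congr (f := fun t => w 0 + (∑ k, D.rho k * ∫ s in (0:ℝ)..t,
    Gk (D.Γ k) (w s)) - t) (by fun_prop) fun t ht => ?_
  exact hw.2.2 t (by rw [uIcc_of_le hT] at ht; exact ht.1)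

lemma IsWorkloadSol.sub_le_sub_of_lt_on (hw : IsWorkloadSol D w) (hw₂ : IsWorkloadSol D w₂)
    {a b : ℝ} (ha : 0 ≤ a) (hab : a ≤ b) (hlt : ∀ s ∈ Ioo a b, w₂ s < w s) :
    w b - w₂ b ≤ w a - w₂ a := by
  have hb := ha.trans hab
  have hint : ∀ k, ∫ s in a..b, Gk (D.Γ k) (w s) ≤ ∫ s in a..b, Gk (D.Γ k) (w₂ s) := fun k =>
    intervalIntegral.integral_mono_on_of_le_Ioo hab (hw.intervalIntegrable k ha hb)
      (hw₂.intervalIntegrable k ha hb) fun s hs => Gk_antitone _ (hlt s hs).le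
  have hsum := Finset.sum_le_sum fun k (_ : k ∈ Finset.univ) =>
    mul_le_mul_of_nonneg_left (hint k) (D.rho_nonneg k)
  linarith [hw.sub_eq ha hb, hw₂.sub_eq ha hb]

lemma IsWorkloadSol.le_of_apply_zero_eq (hw : IsWorkloadSol D w) (hw₂ : IsWorkloadSol D w₂)
    (h0 : w 0 = w₂ 0) {t : ℝ} (ht : 0 ≤ t) : w t ≤ w₂ t := by
  by_contra! hlt
  set S := Icc 0 t ∩ (fun s => w s - w₂ s) ⁻¹' Iic 0
  have hS_closed : IsClosed S :=
    ((hw.continuousOn t).sub (hw₂.continuousOn t)).preimage_isClosed_of_isClosed isClosed_Icc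
      isClosed_Iic
  have hS_bdd : BddAbove S := bddAbove_Icc.mono inter_subset_left
  have hS_ne : S.Nonempty := ⟨0, ⟨le_rfl, ht⟩, by simp [h0]⟩
  -- `sSup S` is the last time in `[0, t]` at which `w ≤ w₂`
  obtain ⟨⟨ht₁0, ht₁t⟩, ht₁⟩ : sSup S ∈ S := hS_closed.csSup_mem hS_ne hS_bdd
  have hgt : ∀ s ∈ Ioo (sSup S) t, w₂ s < w s := fun s hs => by
    by_contra! hle
    exact (le_csSup hS_bdd ⟨⟨ht₁0.trans hs.1.le, hs.2.le⟩, sub_nonpos.mpr hle⟩).not_gt hs.1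
  have := hw.sub_le_sub_of_lt_on hw₂ ht₁0 ht₁t hgt
  simp only [mem_preimage, mem_Iic] at ht₁
  linarith

lemma IsWorkloadSol.eqOn (hw : IsWorkloadSol D w) (hw₂ : IsWorkloadSol D w₂) (h0 : w 0 = w₂ 0) :
    EqOn w w₂ (Ici 0) := fun _ ht =>
  (hw.le_of_apply_zero_eq hw₂ h0 ht).antisymm (hw₂.le_of_apply_zero_eq hw h0.symm ht)

end Workload

section Tau

variable {w : ℝ → ℝ} {s t : ℝ}

lemma tauF_nonneg : 0 ≤ tauF w t := Real.sInf_nonneg fun _ hs => hs.1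

lemma tauF_le_of_mem (hs : 0 ≤ s) (hst : s ≤ t) (h : t ≤ w s + s) : tauF w t ≤ s :=
  csInf_le ⟨0, fun _ hs => hs.1⟩ ⟨hs, hst, h⟩

lemma tauF_le (ht : 0 ≤ t) (hwt : 0 ≤ w t) : tauF w t ≤ t :=
  tauF_le_of_mem ht le_rfl (by linarith)

lemma add_lt_of_lt_tauF (ht : 0 ≤ t) (hwt : 0 ≤ w t) (hs : 0 ≤ s) (hsτ : s < tauF w t) :
    w s + s < t := by
  by_contra! h
  exact hsτ.not_ge (tauF_le_of_mem hs (hsτ.trans_le (tauF_le ht hwt)).le h)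

lemma le_add_of_tauF_lt (hmono : MonotoneOn (fun s => w s + s) (Ici 0)) (ht : 0 ≤ t)
    (hwt : 0 ≤ w t) (hτs : tauF w t < s) : t ≤ w s + s := by
  have hne : {s | 0 ≤ s ∧ s ≤ t ∧ t ≤ w s + s}.Nonempty := ⟨t, ht, le_rfl, by linarith⟩
  obtain ⟨s', ⟨hs'0, -, hs'⟩, hs's⟩ := exists_lt_of_csInf_lt hne hτs
  exact hs'.trans (hmono hs'0 (hs'0.trans hs's.le) hs's.le)

end Tau

section Initial

variable {K : ℕ} {D : Data K} {ϑ : Fin K → Measure (ℝ × ℝ)}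

lemma wMeas_nonneg (ϑ : Fin K → Measure (ℝ × ℝ)) : 0 ≤ wMeas ϑ :=
  Real.sSup_nonneg fun _ hx => hx.1

lemma MemI.measure_Ici_prod_eq_zero (hϑ : MemI D ϑ) (k : Fin K) {x : ℝ} (hx : wMeas ϑ < x) :
    ϑ k (Ici x ×ˢ Ici 0) = 0 := by
  have hnot : ¬ 0 < ∑ j, ϑ j (Ici x ×ˢ Ici (0:ℝ)) := fun hpos =>
    (le_csSup hϑ.2.2.2.1 ⟨(wMeas_nonneg ϑ).trans hx.le, hpos⟩).not_gt hx
  exact Finset.sum_eq_zero_iff.mp (nonpos_iff_eq_zero.mp (not_lt.mp hnot)) k (Finset.mem_univ k)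

lemma MemI.measure_Ioi_prod_eq_zero (hϑ : MemI D ϑ) (k : Fin K) {t : ℝ} (ht : wMeas ϑ ≤ t) :
    ϑ k (Ioi t ×ˢ Ici 0) = 0 := by
  refine measure_mono_null (t := ⋃ n : ℕ, Ici (t + 1 / ((n : ℝ) + 1)) ×ˢ Ici (0 : ℝ)) ?_
    (measure_iUnion_null fun n => hϑ.measure_Ici_prod_eq_zero k (by
      have : (0:ℝ) < 1 / ((n : ℝ) + 1) := Nat.one_div_pos_of_nat
      linarith))
  rintro ⟨a, p⟩ ⟨hta : t < a, hp⟩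
  obtain ⟨n, hn⟩ := exists_nat_one_div_lt (sub_pos.mpr hta)
  exact mem_iUnion.mpr ⟨n, ⟨show t + 1 / ((n : ℝ) + 1) ≤ a by linarith, hp⟩⟩

lemma MemI.measure_shiftd_abandonSet_eq_zero (hϑ : MemI D ϑ) (k : Fin K) {t : ℝ}
    (ht : wMeas ϑ ≤ t) : ϑ k (shiftd abandonSet t) = 0 := by
  have ht0 : 0 ≤ t := (wMeas_nonneg ϑ).trans ht
  have hC : ϑ k (shift Cset (t, 0)) = 0 :=
    Finset.sum_eq_zero_iff.mp (hϑ.2.2.1 (t, 0) ⟨ht0, le_rfl⟩) k (Finset.mem_univ k)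
  refine measure_mono_null ?_ (measure_union_null hC (hϑ.measure_Ioi_prod_eq_zero k ht))
  rintro ⟨a, p⟩ ⟨⟨ha, hp⟩, hpt, hpa⟩
  rcases (show t ≤ a by simp only at hpt hpa; linarith).eq_or_lt with rfl | hta
  · exact Or.inl ⟨⟨ha, hp⟩, Or.inr ⟨sub_self _, by simpa using hp⟩⟩
  · exact Or.inr ⟨hta, hp⟩

end Initial

lemma IsFluidSol.measure_eq {K : ℕ} {D : Data K} {ϑ : Fin K → Measure (ℝ × ℝ)}
    {ζ : ℝ → Fin K → Measure (ℝ × ℝ)} {w : ℝ → ℝ} (hζ : IsFluidSol D ϑ ζ)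
    (hw : IsWorkloadSol D w) (hw0 : w 0 = wMeas ϑ) (k : Fin K) {B : Set (ℝ × ℝ)} (hBQ : B ⊆ Q)
    (hB : MeasurableSet B) {t : ℝ} (ht : 0 ≤ t) :
    IntervalIntegrable (fun s => kern (D.Γ k) (w s) (shiftd B (t - s))) volume 0 t ∧
      ζ t k B = ϑ k (shiftd B t) +
        ENNReal.ofReal (D.lam k * ∫ s in (0:ℝ)..t, kern (D.Γ k) (w s) (shiftd B (t - s))) := by
  obtain ⟨w', hw', hw0', -, -, hform⟩ := hζ
  have heq : EqOn (fun s => kern (D.Γ k) (w' s) (shiftd B (t - s)))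
      (fun s => kern (D.Γ k) (w s) (shiftd B (t - s))) (uIcc 0 t) := fun s hs => by
    rw [uIcc_of_le ht] at hs
    simp only [hw'.eqOn hw (hw0'.trans hw0.symm) hs.1]
  obtain ⟨hint, hζt⟩ := hform k B hBQ hB t ht
  exact ⟨hint.congr (heq.mono uIoc_subset_uIcc), by rw [hζt, intervalIntegral.integral_congr heq]⟩

/-- Fluid abandoning queue-length formula: with
`L = {(a,p) ∈ [0,∞)² : p ≤ a}`, for each `k`, if `0 ≤ t < w(0)` then
`ζ_k(t)(L) = ϑ_k(L_t) + λ_k ∫_0^t (G_k(t−v) − G_k(w(v))) dv`, and if `t ≥ w(0)` then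
`ζ_k(t)(L) = λ_k ∫_{τ(t)}^t (G_k(t−v) − G_k(w(v))) dv`. -/
theorem fluid_abandoning_queue_length {K : ℕ} (D : Data K)
    (ϑ : Fin K → MeasureTheory.Measure (ℝ × ℝ)) (hϑ : MemI D ϑ)
    (ζ : ℝ → Fin K → MeasureTheory.Measure (ℝ × ℝ)) (hζ : IsFluidSol D ϑ ζ)
    (w : ℝ → ℝ) (hw : IsWorkloadSol D w) (hw0 : w 0 = wMeas ϑ) :
    ∀ k,
      (∀ t : ℝ, 0 ≤ t → t < w 0 →
        ζ t k {p : ℝ × ℝ | 0 ≤ p.2 ∧ p.2 ≤ p.1} =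
          ϑ k (shiftd {p : ℝ × ℝ | 0 ≤ p.2 ∧ p.2 ≤ p.1} t) +
            ENNReal.ofReal
              (D.lam k * ∫ v in (0:ℝ)..t, (Gk (D.Γ k) (t - v) - Gk (D.Γ k) (w v)))) ∧
      (∀ t : ℝ, w 0 ≤ t →
        ζ t k {p : ℝ × ℝ | 0 ≤ p.2 ∧ p.2 ≤ p.1} =
          ENNReal.ofReal
            (D.lam k * ∫ v in (tauF w t)..t, (Gk (D.Γ k) (t - v) - Gk (D.Γ k) (w v)))) := by
  intro k
  have hL := fun t (ht : 0 ≤ t) =>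
    hζ.measure_eq hw hw0 k abandonSet_subset_Q measurableSet_abandonSet ht
  have hmono := hw.monotoneOn_add
  refine ⟨fun t ht htw => ?_, fun t htw => ?_⟩
  · obtain ⟨hint, hζt⟩ := hL t ht
    have hafter : ∀ s ∈ Ioo 0 t, t - s ≤ w s := fun s hs => by
      have := hmono (mem_Ici.mpr le_rfl) (mem_Ici.mpr hs.1.le) hs.1.le
      simp only [add_zero] at this
      linarith
    rwa [integral_kern_shiftd_abandonSet (D.Γ k) le_rfl ht hint
      (fun s hs => absurd (hs.1.trans hs.2) (lt_irrefl 0)) hafter] at hζt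
  · have ht : 0 ≤ t := (hw.1 0 le_rfl).trans htw
    have hwt : 0 ≤ w t := hw.1 t ht
    obtain ⟨hint, hζt⟩ := hL t ht
    rwa [hϑ.measure_shiftd_abandonSet_eq_zero k (hw0 ▸ htw), zero_add,
      integral_kern_shiftd_abandonSet (D.Γ k) tauF_nonneg (tauF_le ht hwt) hint
        (fun s hs => by linarith [add_lt_of_lt_tauF ht hwt hs.1.le hs.2])
        (fun s hs => by linarith [le_add_of_tauF_lt hmono ht hwt hs.1])] at hζt

end OverloadedFIFO
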